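/- (Theorem 1) The CRAN throughput maximization problem is equivalent to a maximum weight clique problem over the CRAN-IDNC graph with vertex weight w(b, z, u, f, r) = r: the maximum, over all cliques C of the CRAN-IDNC graph, of the total weight ∑_{(b,z,u,f,r) ∈ C} r equals the maximum, over all feasible schedules, of the throughput ∑_{(b,z) : τ(b,z) ≠ ∅} |τ(b, z)| · r(b, z). (Both maxima exist since the sets of cliques and of feasible schedules are finite and contain the empty clique, respectively the empty schedule, of value 0.) -/

import Mathlib

/-- A vertex of the CRAN-IDNC graph: a tuple (b, z, u, f, r). -/
structure CV (B Z U F : Type*) where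
  b : B
  z : Z
  u : U
  f : F
  r : ℝ


noncomputable instance {B Z U F : Type*} : DecidableEq (CV B Z U F) :=
  Classical.decEq _

variable {B Z U F : Type*}

/-- `v` is a valid vertex: `f ∈ W(u)`, `r ∈ R`, and `r ≤ cap(b, z, u)`. -/
def IsVertex (W : U → Finset F) (Rset : Finset ℝ) (cap : B → Z → U → ℝ)
    (v : CV B Z U F) : Prop :=
  v.f ∈ W v.u ∧ v.r ∈ Rset ∧ v.r ≤ cap v.b v.z v.u

/-- Adjacency in the CRAN-IDNC graph. -/
def Adj (H : U → Finset F) (v v' : CV B Z U F) : Prop :=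
  v ≠ v' ∧
    (((v.b, v.z) = (v'.b, v'.z) ∧
        ((v.f = v'.f ∨ (v.f ∈ H v'.u ∧ v'.f ∈ H v.u)) ∧ v.r = v'.r)) ∨
      ((v.b, v.z) ≠ (v'.b, v'.z) ∧
        ((v.u = v'.u ∧ v.b = v'.b) ∨
          (v.b = v'.b ∧ (v.f = v'.f ∨ (v.f ∈ H v'.u ∧ v'.f ∈ H v.u))) ∨
          v.u ≠ v'.u)))

/-- A clique of the CRAN-IDNC graph: a finite set of valid vertices that are
pairwise adjacent. -/
def IsClique (H W : U → Finset F) (Rset : Finset ℝ) (cap : B → Z → U → ℝ)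
    (C : Finset (CV B Z U F)) : Prop :=
  (∀ v ∈ C, IsVertex W Rset cap v) ∧
    ∀ v ∈ C, ∀ v' ∈ C, v ≠ v' → Adj H v v'

/-- The feasibility conditions (i)–(iv) of a schedule `(τ, κ, rate)`:
(i) each user is served by at most one RRH; (ii) the combination `κ (b, z)`
contains exactly one wanted file of each targeted user and all its other files
are in that user's Has set; (iii) the rate does not exceed the capacity of any
targeted user (and lies in `Rset` whenever the block is used); and (iv) the
combination consists exactly of the wanted files of the targeted users. -/
def Feasible [DecidableEq F] (H W : U → Finset F) (Rset : Finset ℝ)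
    (cap : B → Z → U → ℝ) (τ : B → Z → Finset U) (κ : B → Z → Finset F)
    (rate : B → Z → ℝ) : Prop :=
  (∀ b z, (τ b z).Nonempty → rate b z ∈ Rset) ∧
  (∀ b z b' z' u, u ∈ τ b z → u ∈ τ b' z' → b = b') ∧
  (∀ b z u, u ∈ τ b z → ∃ f, κ b z ∩ W u = {f} ∧ κ b z \ {f} ⊆ H u) ∧
  (∀ b z u, u ∈ τ b z → rate b z ≤ cap b z u) ∧
  (∀ b z, κ b z = (τ b z).biUnion fun u => κ b z ∩ W u)

/-!
A clique splits along the resource blocks `(b, z)`. Within one block, LC2 forces a common rate,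
and LC1 together with `H u ∩ W u = ∅` allows at most one vertex per user and makes the files of
the block an IDNC combination serving each of its users; across blocks, GC1–GC3 only say that a
user is served by a single RRH. Conversely, the vertices `(b, z, u, f_u, r(b, z))` of a feasible
schedule form a clique. Either way, block `(b, z)` contributes `|τ(b, z)| · r(b, z)`, so cliques and
schedules achieve the same values; these form a finite set (cliques live among the finitely many
vertices with rate in `R`) containing `0`.
-/

open Finset

attribute [ext] CV

section Graph

variable {H W : U → Finset F} {Rset : Finset ℝ} {cap : B → Z → U → ℝ}
  {C : Finset (CV B Z U F)} {v v' : CV B Z U F}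

lemma Adj.of_block_eq (h : Adj H v v') (hb : v.b = v'.b) (hz : v.z = v'.z) :
    (v.f = v'.f ∨ (v.f ∈ H v'.u ∧ v'.f ∈ H v.u)) ∧ v.r = v'.r := by
  rcases h with ⟨-, ⟨-, h⟩ | ⟨hne, -⟩⟩
  · exact h
  · simp [hb, hz] at hne

lemma Adj.b_eq_of_u_eq (h : Adj H v v') (hu : v.u = v'.u) : v.b = v'.b := by
  rcases h with ⟨-, ⟨hbz, -⟩ | ⟨-, ⟨-, hb⟩ | ⟨hb, -⟩ | hne⟩⟩
  · exact congrArg Prod.fst hbz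
  · exact hb
  · exact hb
  · exact absurd hu hne

lemma isClique_empty : IsClique H W Rset cap (∅ : Finset (CV B Z U F)) := by
  simp [IsClique]

lemma IsClique.r_eq (hC : IsClique H W Rset cap C) (hv : v ∈ C) (hv' : v' ∈ C)
    (hb : v.b = v'.b) (hz : v.z = v'.z) : v.r = v'.r := by
  obtain rfl | hne := eq_or_ne v v'
  · rfl
  · exact ((hC.2 v hv v' hv' hne).of_block_eq hb hz).2

lemma IsClique.f_eq_or_mem_has (hC : IsClique H W Rset cap C) (hv : v ∈ C) (hv' : v' ∈ C)
    (hb : v'.b = v.b) (hz : v'.z = v.z) : v'.f = v.f ∨ v'.f ∈ H v.u := by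
  obtain rfl | hne := eq_or_ne v' v
  · exact Or.inl rfl
  · exact ((hC.2 v' hv' v hv hne).of_block_eq hb hz).1.imp id And.left

lemma IsClique.b_eq_of_u_eq (hC : IsClique H W Rset cap C) (hv : v ∈ C) (hv' : v' ∈ C)
    (hu : v.u = v'.u) : v.b = v'.b := by
  obtain rfl | hne := eq_or_ne v v'
  · rfl
  · exact (hC.2 v hv v' hv' hne).b_eq_of_u_eq hu

lemma IsClique.eq_of_u_eq (hDisj : ∀ u, Disjoint (H u) (W u))
    (hC : IsClique H W Rset cap C) (hv : v ∈ C) (hv' : v' ∈ C)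
    (hb : v.b = v'.b) (hz : v.z = v'.z) (hu : v.u = v'.u) : v = v' := by
  have hf : v.f = v'.f := (hC.f_eq_or_mem_has hv' hv hb hz).resolve_right fun hH =>
    Finset.disjoint_left.1 (hDisj v'.u) hH (hu ▸ (hC.1 v hv).1)
  exact CV.ext hb hz hu hf (hC.r_eq hv hv' hb hz)

noncomputable def verticesWithRateIn [Fintype B] [Fintype Z] [Fintype U] [Fintype F]
    (Rset : Finset ℝ) : Finset (CV B Z U F) :=
  (univ ×ˢ Rset).image fun q : (B × Z × U × F) × ℝ => ⟨q.1.1, q.1.2.1, q.1.2.2.1, q.1.2.2.2, q.2⟩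

lemma finite_cliqueWeights [Fintype B] [Fintype Z] [Fintype U] [Fintype F] :
    {x : ℝ | ∃ C : Finset (CV B Z U F), IsClique H W Rset cap C ∧ x = ∑ v ∈ C, v.r}.Finite := by
  refine ((verticesWithRateIn Rset).powerset.image
    fun C : Finset (CV B Z U F) => ∑ v ∈ C, v.r).finite_toSet.subset ?_
  rintro _ ⟨C, hC, rfl⟩
  refine mem_image.2 ⟨C, mem_powerset.2 fun v hv => mem_image.2 ?_, rfl⟩
  exact ⟨((v.b, v.z, v.u, v.f), v.r), by simp [(hC.1 v hv).2.1], rfl⟩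

end Graph

section Weight

variable [DecidableEq B] [DecidableEq Z]

def verticesAt (C : Finset (CV B Z U F)) (b : B) (z : Z) : Finset (CV B Z U F) :=
  {v ∈ C | v.b = b ∧ v.z = z}

@[simp]
lemma mem_verticesAt {C : Finset (CV B Z U F)} {b : B} {z : Z} {v : CV B Z U F} :
    v ∈ verticesAt C b z ↔ v ∈ C ∧ v.b = b ∧ v.z = z :=
  mem_filter

lemma sum_r_eq_sum_card_mul [Fintype B] [Fintype Z] [DecidableEq U]
    (C : Finset (CV B Z U F)) (τ : B → Z → Finset U) (rate : B → Z → ℝ)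
    (hτ : ∀ b z, τ b z = (verticesAt C b z).image CV.u)
    (hinj : ∀ v ∈ C, ∀ v' ∈ C, v.b = v'.b → v.z = v'.z → v.u = v'.u → v = v')
    (hr : ∀ v ∈ C, v.r = rate v.b v.z) :
    ∑ v ∈ C, v.r = ∑ p : B × Z, ((τ p.1 p.2).card : ℝ) * rate p.1 p.2 := by
  rw [sum_congr rfl hr, ← sum_fiberwise C (fun v => (v.b, v.z))]
  refine sum_congr rfl fun p _ => ?_
  have hfiber : {v ∈ C | (v.b, v.z) = p} = verticesAt C p.1 p.2 := by
    ext v; simp [Prod.ext_iff]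
  have hcard : (τ p.1 p.2).card = (verticesAt C p.1 p.2).card := by
    rw [hτ]
    refine card_image_of_injOn fun v hv v' hv' hu => ?_
    rw [mem_coe, mem_verticesAt] at hv hv'
    exact hinj v hv.1 v' hv'.1 (hv.2.1.trans hv'.2.1.symm) (hv.2.2.trans hv'.2.2.symm) hu
  calc ∑ v ∈ {v ∈ C | (v.b, v.z) = p}, rate v.b v.z
      = ∑ v ∈ verticesAt C p.1 p.2, rate p.1 p.2 := by
        rw [hfiber]
        refine sum_congr rfl fun v hv => ?_
        obtain ⟨-, hb, hz⟩ := mem_verticesAt.1 hv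
        rw [hb, hz]
    _ = _ := by rw [sum_const, nsmul_eq_mul, hcard]

end Weight

lemma sum_filter_nonempty_card_mul {ι α : Type*} (s : Finset ι) (t : ι → Finset α) (g : ι → ℝ) :
    ∑ i ∈ s with (t i).Nonempty, ((t i).card : ℝ) * g i = ∑ i ∈ s, ((t i).card : ℝ) * g i :=
  sum_filter_of_ne fun i _ h => nonempty_of_ne_empty fun he => h (by simp [he])

section CliqueSchedule

variable [DecidableEq B] [DecidableEq Z] {H W : U → Finset F} {Rset : Finset ℝ}
  {cap : B → Z → U → ℝ} {C : Finset (CV B Z U F)}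

def cliqueUsers [DecidableEq U] (C : Finset (CV B Z U F)) (b : B) (z : Z) : Finset U :=
  (verticesAt C b z).image CV.u

def cliqueFiles [DecidableEq F] (C : Finset (CV B Z U F)) (b : B) (z : Z) : Finset F :=
  (verticesAt C b z).image CV.f

noncomputable def cliqueRate (C : Finset (CV B Z U F)) (b : B) (z : Z) : ℝ :=
  if h : (verticesAt C b z).Nonempty then h.choose.r else 0

lemma mem_cliqueUsers [DecidableEq U] {b : B} {z : Z} {u : U} :
    u ∈ cliqueUsers C b z ↔ ∃ v ∈ C, v.b = b ∧ v.z = z ∧ v.u = u := by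
  simp [cliqueUsers, and_assoc]

lemma mem_cliqueFiles [DecidableEq F] {b : B} {z : Z} {f : F} :
    f ∈ cliqueFiles C b z ↔ ∃ v ∈ C, v.b = b ∧ v.z = z ∧ v.f = f := by
  simp [cliqueFiles, and_assoc]

lemma IsClique.cliqueRate_eq (hC : IsClique H W Rset cap C) {v : CV B Z U F} (hv : v ∈ C) :
    cliqueRate C v.b v.z = v.r := by
  have hne : (verticesAt C v.b v.z).Nonempty := ⟨v, mem_verticesAt.2 ⟨hv, rfl, rfl⟩⟩
  obtain ⟨hw, hb, hz⟩ := mem_verticesAt.1 hne.choose_spec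
  rw [cliqueRate, dif_pos hne]
  exact hC.r_eq hw hv hb hz

lemma IsClique.feasible [DecidableEq U] [DecidableEq F] (hDisj : ∀ u, Disjoint (H u) (W u))
    (hC : IsClique H W Rset cap C) :
    Feasible H W Rset cap (cliqueUsers C) (cliqueFiles C) (cliqueRate C) := by
  refine ⟨?rate_mem, ?one_rrh, ?files, ?rate_le, ?cover⟩
  case rate_mem =>
    rintro b z ⟨u, hu⟩
    obtain ⟨v, hv, rfl, rfl, -⟩ := mem_cliqueUsers.1 hu
    rw [hC.cliqueRate_eq hv]
    exact (hC.1 v hv).2.1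
  case one_rrh =>
    intro b z b' z' u hu hu'
    obtain ⟨v, hv, rfl, -, rfl⟩ := mem_cliqueUsers.1 hu
    obtain ⟨v', hv', rfl, -, hu⟩ := mem_cliqueUsers.1 hu'
    exact hC.b_eq_of_u_eq hv hv' hu.symm
  case files =>
    intro b z u hu
    obtain ⟨v, hv, rfl, rfl, rfl⟩ := mem_cliqueUsers.1 hu
    refine ⟨v.f, eq_singleton_iff_unique_mem.2 ⟨?_, ?_⟩, ?_⟩
    · exact mem_inter.2 ⟨mem_cliqueFiles.2 ⟨v, hv, rfl, rfl, rfl⟩, (hC.1 v hv).1⟩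
    · rintro g hg
      obtain ⟨⟨v', hv', hb, hz, rfl⟩, hW⟩ := mem_inter.1 hg |>.imp_left mem_cliqueFiles.1
      exact (hC.f_eq_or_mem_has hv hv' hb hz).resolve_right
        fun hH => Finset.disjoint_left.1 (hDisj v.u) hH hW
    · intro g hg
      obtain ⟨hg, hne⟩ := mem_sdiff.1 hg
      obtain ⟨v', hv', hb, hz, rfl⟩ := mem_cliqueFiles.1 hg
      exact (hC.f_eq_or_mem_has hv hv' hb hz).resolve_left (notMem_singleton.1 hne)
  case rate_le =>
    intro b z u hu
    obtain ⟨v, hv, rfl, rfl, rfl⟩ := mem_cliqueUsers.1 hu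
    rw [hC.cliqueRate_eq hv]
    exact (hC.1 v hv).2.2
  case cover =>
    intro b z
    ext g
    simp only [mem_biUnion, mem_inter]
    refine ⟨fun hg => ?_, fun ⟨_, _, hg, _⟩ => hg⟩
    obtain ⟨v, hv, rfl, rfl, rfl⟩ := mem_cliqueFiles.1 hg
    exact ⟨v.u, mem_cliqueUsers.2 ⟨v, hv, rfl, rfl, rfl⟩, hg, (hC.1 v hv).1⟩

lemma IsClique.sum_r_eq [Fintype B] [Fintype Z] [DecidableEq U]
    (hDisj : ∀ u, Disjoint (H u) (W u)) (hC : IsClique H W Rset cap C) :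
    ∑ v ∈ C, v.r = ∑ p : B × Z, ((cliqueUsers C p.1 p.2).card : ℝ) * cliqueRate C p.1 p.2 :=
  sum_r_eq_sum_card_mul C _ _ (fun _ _ => rfl)
    (fun _ hv _ hv' => hC.eq_of_u_eq hDisj hv hv') fun _ hv => (hC.cliqueRate_eq hv).symm

end CliqueSchedule

section ScheduleClique

variable [DecidableEq F] {H W : U → Finset F} {Rset : Finset ℝ} {cap : B → Z → U → ℝ}
  {τ : B → Z → Finset U} {κ : B → Z → Finset F} {rate : B → Z → ℝ}

noncomputable def scheduleClique [Fintype B] [Fintype Z] (W : U → Finset F)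
    (τ : B → Z → Finset U) (κ : B → Z → Finset F) (rate : B → Z → ℝ) : Finset (CV B Z U F) :=
  univ.biUnion fun b => univ.biUnion fun z => (τ b z).biUnion fun u =>
    (κ b z ∩ W u).image fun f => ⟨b, z, u, f, rate b z⟩

lemma mem_scheduleClique [Fintype B] [Fintype Z] {v : CV B Z U F} :
    v ∈ scheduleClique W τ κ rate ↔
      v.u ∈ τ v.b v.z ∧ v.f ∈ κ v.b v.z ∩ W v.u ∧ v.r = rate v.b v.z := by
  simp only [scheduleClique, mem_biUnion, mem_univ, true_and, mem_image]
  constructor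
  · rintro ⟨b, z, u, hu, f, hf, rfl⟩
    exact ⟨hu, hf, rfl⟩
  · rintro ⟨hu, hf, hr⟩
    exact ⟨v.b, v.z, v.u, hu, v.f, hf, CV.ext rfl rfl rfl rfl hr.symm⟩

lemma Feasible.eq_of_mem_wants (hF : Feasible H W Rset cap τ κ rate) {b : B} {z : Z} {u : U}
    {f g : F} (hu : u ∈ τ b z) (hf : f ∈ κ b z ∩ W u) (hg : g ∈ κ b z ∩ W u) : g = f := by
  obtain ⟨f₀, hκW, -⟩ := hF.2.2.1 b z u hu
  rw [hκW, mem_singleton] at hf hg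
  exact hg.trans hf.symm

lemma Feasible.eq_or_mem_has (hF : Feasible H W Rset cap τ κ rate) {b : B} {z : Z} {u : U}
    {f g : F} (hu : u ∈ τ b z) (hf : f ∈ κ b z ∩ W u) (hg : g ∈ κ b z) : g = f ∨ g ∈ H u := by
  obtain ⟨f₀, hκW, hH⟩ := hF.2.2.1 b z u hu
  rw [hκW, mem_singleton] at hf
  subst hf
  by_cases hgf : g = f
  · exact Or.inl hgf
  · exact Or.inr (hH (mem_sdiff.2 ⟨hg, notMem_singleton.2 hgf⟩))

lemma Feasible.isClique_scheduleClique [Fintype B] [Fintype Z]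
    (hF : Feasible H W Rset cap τ κ rate) : IsClique H W Rset cap (scheduleClique W τ κ rate) := by
  refine ⟨fun v hv => ?_, fun v hv v' hv' hne => ⟨hne, ?_⟩⟩
  · obtain ⟨hu, hf, hr⟩ := mem_scheduleClique.1 hv
    exact ⟨(mem_inter.1 hf).2, hr ▸ hF.1 _ _ ⟨_, hu⟩, hr ▸ hF.2.2.2.1 _ _ _ hu⟩
  obtain ⟨hu, hf, hr⟩ := mem_scheduleClique.1 hv
  obtain ⟨hu', hf', hr'⟩ := mem_scheduleClique.1 hv'
  by_cases hbz : (v.b, v.z) = (v'.b, v'.z)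
  · obtain ⟨hb, hz⟩ := Prod.ext_iff.1 hbz
    dsimp only at hb hz
    refine Or.inl ⟨hbz, ?_, by rw [hr, hr', hb, hz]⟩
    rw [hb, hz] at hu hf
    obtain hff | hH := hF.eq_or_mem_has hu' hf' (mem_inter.1 hf).1
    · exact Or.inl hff
    obtain hff | hH' := hF.eq_or_mem_has hu hf (mem_inter.1 hf').1
    · exact Or.inl hff.symm
    · exact Or.inr ⟨hH, hH'⟩
  · refine Or.inr ⟨hbz, ?_⟩
    by_cases huu : v.u = v'.u
    · exact Or.inl ⟨huu, hF.2.1 _ _ _ _ _ hu (huu ▸ hu')⟩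
    · exact Or.inr (Or.inr huu)

lemma Feasible.sum_scheduleClique [Fintype B] [Fintype Z] [DecidableEq B] [DecidableEq Z]
    [DecidableEq U] (hF : Feasible H W Rset cap τ κ rate) :
    ∑ v ∈ scheduleClique W τ κ rate, v.r = ∑ p : B × Z, ((τ p.1 p.2).card : ℝ) * rate p.1 p.2 := by
  refine sum_r_eq_sum_card_mul _ _ _ (fun b z => ?_) (fun v hv v' hv' hb hz hu => ?_)
    fun v hv => (mem_scheduleClique.1 hv).2.2
  · ext u
    simp only [mem_image, mem_verticesAt, mem_scheduleClique]
    constructor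
    · intro hu
      obtain ⟨f, hκW, -⟩ := hF.2.2.1 b z u hu
      exact ⟨⟨b, z, u, f, rate b z⟩, ⟨⟨hu, hκW ▸ mem_singleton_self f, rfl⟩, rfl, rfl⟩, rfl⟩
    · rintro ⟨v, ⟨⟨hu, -⟩, rfl, rfl⟩, rfl⟩
      exact hu
  · obtain ⟨hu₁, hf₁, hr₁⟩ := mem_scheduleClique.1 hv
    obtain ⟨-, hf₂, hr₂⟩ := mem_scheduleClique.1 hv'
    rw [hb, hz, hu] at hu₁ hf₁
    exact CV.ext hb hz hu (hF.eq_of_mem_wants hu₁ hf₂ hf₁) (by rw [hr₁, hr₂, hb, hz])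

end ScheduleClique

lemma cliqueWeights_eq_throughputs [Fintype B] [Fintype Z] [DecidableEq F]
    {H W : U → Finset F} {Rset : Finset ℝ} {cap : B → Z → U → ℝ}
    (hDisj : ∀ u, Disjoint (H u) (W u)) :
    {x : ℝ | ∃ C : Finset (CV B Z U F), IsClique H W Rset cap C ∧ x = ∑ v ∈ C, v.r} =
      {x : ℝ | ∃ (τ : B → Z → Finset U) (κ : B → Z → Finset F) (rate : B → Z → ℝ),
        Feasible H W Rset cap τ κ rate ∧
          x = ∑ p ∈ Finset.univ.filter (fun p : B × Z => (τ p.1 p.2).Nonempty),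
            ((τ p.1 p.2).card : ℝ) * rate p.1 p.2} := by
  classical
  ext x
  constructor
  · rintro ⟨C, hC, rfl⟩
    exact ⟨_, _, _, hC.feasible hDisj, by rw [hC.sum_r_eq hDisj, sum_filter_nonempty_card_mul]⟩
  · rintro ⟨τ, κ, rate, hF, rfl⟩
    exact ⟨_, hF.isClique_scheduleClique,
      by rw [hF.sum_scheduleClique, sum_filter_nonempty_card_mul]⟩

theorem throughput_max_eq_max_weight_clique_general {B Z U F : Type*}
    [Fintype B] [Fintype Z] [Fintype U] [Fintype F]
    [DecidableEq F]
    (H W : U → Finset F) (Rset : Finset ℝ) (cap : B → Z → U → ℝ)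
    (hDisj : ∀ u, Disjoint (H u) (W u)) :
    ∃ m : ℝ,
      IsGreatest {x : ℝ | ∃ C : Finset (CV B Z U F),
          IsClique H W Rset cap C ∧ x = ∑ v ∈ C, v.r} m ∧
      IsGreatest {x : ℝ | ∃ (τ : B → Z → Finset U) (κ : B → Z → Finset F)
            (rate : B → Z → ℝ), Feasible H W Rset cap τ κ rate ∧
          x = ∑ p ∈ Finset.univ.filter (fun p : B × Z => (τ p.1 p.2).Nonempty),
            ((τ p.1 p.2).card : ℝ) * rate p.1 p.2} m := by
  obtain ⟨m, hm⟩ := (finite_cliqueWeights (H := H) (W := W) (Rset := Rset) (cap := cap)).isCompact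
    |>.exists_isGreatest ⟨0, ∅, isClique_empty, by simp⟩
  refine ⟨m, hm, ?_⟩
  rwa [← cliqueWeights_eq_throughputs hDisj]

/-- **Theorem 1.** The CRAN throughput maximization problem is equivalent to a
maximum weight clique problem over the CRAN-IDNC graph: the maximum weight of a
clique equals the maximum throughput of a feasible schedule. -/
theorem throughput_max_eq_max_weight_clique {B Z U F : Type*}
    [Fintype B] [Fintype Z] [Fintype U] [Fintype F]
    [DecidableEq B] [DecidableEq Z] [DecidableEq U] [DecidableEq F]
    (H W : U → Finset F) (Rset : Finset ℝ) (cap : B → Z → U → ℝ)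
    (hDisj : ∀ u, Disjoint (H u) (W u)) (hRpos : ∀ r ∈ Rset, 0 < r) :
    ∃ m : ℝ,
      IsGreatest {x : ℝ | ∃ C : Finset (CV B Z U F),
          IsClique H W Rset cap C ∧ x = ∑ v ∈ C, v.r} m ∧
      IsGreatest {x : ℝ | ∃ (τ : B → Z → Finset U) (κ : B → Z → Finset F)
            (rate : B → Z → ℝ), Feasible H W Rset cap τ κ rate ∧
          x = ∑ p ∈ Finset.univ.filter (fun p : B × Z => (τ p.1 p.2).Nonempty),
            ((τ p.1 p.2).card : ℝ) * rate p.1 p.2} m :=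
  throughput_max_eq_max_weight_clique_general H W Rset cap hDisj
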